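/- arXiv:1510.04931 — 3 statements merged into one kernel-verified Lean document; each statement's English description precedes it below -/
import Mathlib

section
/- Assume Γ_1 > 0. Let π₁ and π₂ be policies that coincide for the first k steps, i.e., π₁(ae_{<t}) = π₂(ae_{<t}) for every history ae_{<t} consistent with π₁ with t ≤ k. Then for every CCS ν, |V^{π₁}_ν(ϵ) − V^{π₂}_ν(ϵ)| ≤ Γ_{k+1}/Γ_1, where ϵ denotes the empty history. -/
open scoped Classical

/-- A history: a finite alternating sequence of action–percept pairs. -/
abbrev Hist (A E : Type*) := List (A × E)

/-- A policy maps histories to actions. -/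
abbrev Policy (A E : Type*) := Hist A E → A

/-- A chronological conditional semimeasure (CCS, environment):
values in `[0,1]`, and the chronological semimeasure condition. -/
structure CCS (A E : Type*) [Fintype E] where
  val : Hist A E → ℝ
  nonneg : ∀ h, 0 ≤ val h
  le_one : ∀ h, val h ≤ 1
  chrono : ∀ (h : Hist A E) (a : A), (∑ e : E, val (h ++ [(a, e)])) ≤ val h

/-- `Gam γ t = Γ_t = ∑_{i ≥ t} γ_i`, the discount normalization factor. -/
noncomputable def Gam (γ : ℕ → ℝ) (t : ℕ) : ℝ := ∑' i : ℕ, γ (t + i)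

/-- Extend a history by a list of percepts, with actions chosen by the policy `π`. -/
def extendH {A E : Type*} (π : Policy A E) : Hist A E → List E → Hist A E
  | h, [] => h
  | h, e :: es => extendH π (h ++ [(π h, e)]) es

/-- The value `V^π_ν(ae_{<t})` of policy `π` in environment `ν` given history `h = ae_{<t}`
(with `t = h.length + 1`); `0` whenever `Γ_t ≤ 0` or `ν(e_{<t} ∣ a_{<t}) ≤ 0`. -/
noncomputable def V {A E : Type*} [Fintype E] (γ : ℕ → ℝ) (r : E → ℝ)
    (π : Policy A E) (ν : CCS A E) (h : Hist A E) : ℝ :=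
  if 0 < Gam γ (h.length + 1) ∧ 0 < ν.val h then
    (1 / (Gam γ (h.length + 1) * ν.val h)) *
      ∑' n : ℕ, γ (h.length + 1 + n) *
        ∑ es : Fin (n + 1) → E,
          r (es (Fin.last n)) * ν.val (extendH π h (List.ofFn es))
  else 0

/-- The value `V^π_ν(h a)` of a history ending in the action `a`:
the action at time `t` is `a`, and `π` is followed from time `t+1` on. -/
noncomputable def Vact {A E : Type*} [Fintype E] (γ : ℕ → ℝ) (r : E → ℝ)
    (π : Policy A E) (ν : CCS A E) (h : Hist A E) (a : A) : ℝ :=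
  V γ r (fun h' => if h' = h then a else π h') ν h

/-- The optimal value `V^*_ν(h) = sup_π V^π_ν(h)`. -/
noncomputable def VOpt {A E : Type*} [Fintype E] (γ : ℕ → ℝ) (r : E → ℝ)
    (ν : CCS A E) (h : Hist A E) : ℝ :=
  ⨆ π : Policy A E, V γ r π ν h

/-- The optimal value `V^*_ν(h a)` of a history ending in an action. -/
noncomputable def VOptAct {A E : Type*} [Fintype E] (γ : ℕ → ℝ) (r : E → ℝ)
    (ν : CCS A E) (h : Hist A E) (a : A) : ℝ :=
  ⨆ π : Policy A E, Vact γ r π ν h a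

/-- A history is consistent with `π` iff each of its actions is the one chosen by `π`. -/
def Consistent {A E : Type*} (π : Policy A E) (h : Hist A E) : Prop :=
  ∀ (k : ℕ) (hk : k < h.length), (h.get ⟨k, hk⟩).1 = π (h.take k)

/-!
Two policies that coincide for `k` steps generate the same histories up to time `k`, so the
expected rewards at times `1, …, k` agree. At any later time the expected
reward lies in `[0, ν(ϵ)]`, since rewards lie in `[0, 1]` and the chronological condition bounds
the total mass of all continuations of a history by its own mass. Hence the two discounted sums
differ by at most `ν(ϵ) Γ_{k+1}`, and dividing by the normalization `Γ_1 ν(ϵ)` gives the bound.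
-/

section Consistency

variable {A E : Type*}

lemma Consistent.append_singleton {π : Policy A E} {h : Hist A E} (hc : Consistent π h)
    (e : E) : Consistent π (h ++ [(π h, e)]) := by
  intro j hj
  rw [List.length_append, List.length_singleton] at hj
  rcases (Nat.lt_succ_iff.mp hj).lt_or_eq with hj | rfl
  · simpa [List.getElem_append_left hj, List.take_append_of_le_length hj.le] using hc j hj
  · simp

lemma extendH_eq_of_agree {π₁ π₂ : Policy A E} {k : ℕ}
    (hcoin : ∀ h : Hist A E, Consistent π₁ h → h.length < k → π₁ h = π₂ h) :
    ∀ (es : List E) (h : Hist A E), Consistent π₁ h → h.length + es.length ≤ k →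
      extendH π₁ h es = extendH π₂ h es
  | [], _, _, _ => rfl
  | e :: es, h, hc, hlen => by
    have hlt : h.length < k := by simp only [List.length_cons] at hlen; omega
    simp only [extendH, ← hcoin h hc hlt]
    exact extendH_eq_of_agree hcoin es _ (hc.append_singleton e)
      (by simp only [List.length_append, List.length_cons, List.length_nil] at hlen ⊢; omega)

end Consistency

section Environment

variable {A E : Type*} [Fintype E]

lemma sum_extendH_le (ν : CCS A E) (π : Policy A E) (n : ℕ) (h : Hist A E) :
    ∑ es : Fin n → E, ν.val (extendH π h (List.ofFn es)) ≤ ν.val h := by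
  induction n generalizing h with
  | zero => simp [extendH]
  | succ n ih =>
    rw [← (Fin.consEquiv fun _ => E).sum_comp, Fintype.sum_prod_type]
    calc ∑ e, ∑ es : Fin n → E,
          ν.val (extendH π h (List.ofFn (Fin.consEquiv (fun _ => E) (e, es))))
        = ∑ e, ∑ es : Fin n → E, ν.val (extendH π (h ++ [(π h, e)]) (List.ofFn es)) := by
          simp [Fin.consEquiv, List.ofFn_succ, extendH]
      _ ≤ ∑ e, ν.val (h ++ [(π h, e)]) := Finset.sum_le_sum fun e _ => ih _
      _ ≤ ν.val h := ν.chrono h (π h)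

/-- For `h = ae_{<t}` this is `Σ_{e_{t:t+n}} r(e_{t+n}) ν(e_{1:t+n} ∣ a_{1:t+n})` with the actions
`a_{t:t+n}` chosen by `π`: the reward expected at time `t + n`, not yet normalized by `ν(h)`. -/
noncomputable def expectedReward (r : E → ℝ) (π : Policy A E) (ν : CCS A E) (h : Hist A E)
    (n : ℕ) : ℝ :=
  ∑ es : Fin (n + 1) → E, r (es (Fin.last n)) * ν.val (extendH π h (List.ofFn es))

variable {r : E → ℝ}

lemma expectedReward_mem_Icc (hr : ∀ e, 0 ≤ r e ∧ r e ≤ 1) (π : Policy A E) (ν : CCS A E)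
    (h : Hist A E) (n : ℕ) : 0 ≤ expectedReward r π ν h n ∧ expectedReward r π ν h n ≤ ν.val h :=
  ⟨Finset.sum_nonneg fun _ _ => mul_nonneg (hr _).1 (ν.nonneg _),
    calc expectedReward r π ν h n
        ≤ ∑ es : Fin (n + 1) → E, ν.val (extendH π h (List.ofFn es)) :=
          Finset.sum_le_sum fun _ _ => mul_le_of_le_one_left (ν.nonneg _) (hr _).2
      _ ≤ ν.val h := sum_extendH_le ν π (n + 1) h⟩

lemma expectedReward_eq_of_agree {π₁ π₂ : Policy A E} {k : ℕ}
    (hcoin : ∀ h : Hist A E, Consistent π₁ h → h.length < k → π₁ h = π₂ h) (ν : CCS A E)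
    {h : Hist A E} (hc : Consistent π₁ h) {n : ℕ} (hn : h.length + n < k) :
    expectedReward r π₁ ν h n = expectedReward r π₂ ν h n :=
  Finset.sum_congr rfl fun es _ => by
    rw [extendH_eq_of_agree hcoin _ h hc (by rw [List.length_ofFn]; omega)]

end Environment

section Discount

variable {γ : ℕ → ℝ} (hγ0 : ∀ t, 0 ≤ γ t)
include hγ0

lemma Gam_nonneg (t : ℕ) : 0 ≤ Gam γ t := tsum_nonneg fun _ => hγ0 _

variable (hγs : Summable γ) {a : ℕ → ℝ} {c : ℝ} (ha : ∀ n, 0 ≤ a n ∧ a n ≤ c)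
include hγs ha

lemma summable_discounted (t : ℕ) : Summable fun n => γ (t + n) * a n :=
  Summable.of_nonneg_of_le (fun n => mul_nonneg (hγ0 _) (ha n).1)
    (fun n => mul_le_mul_of_nonneg_left (ha n).2 (hγ0 _))
    ((hγs.comp_injective (add_right_injective t)).mul_right c)

lemma tsum_discounted_mem_Icc (t : ℕ) :
    0 ≤ ∑' n, γ (t + n) * a n ∧ ∑' n, γ (t + n) * a n ≤ c * Gam γ t := by
  refine ⟨tsum_nonneg fun n => mul_nonneg (hγ0 _) (ha n).1, ?_⟩
  rw [Gam, ← tsum_mul_left]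
  refine (summable_discounted hγ0 hγs ha t).tsum_le_tsum (fun n => ?_)
    ((hγs.comp_injective (add_right_injective t)).mul_left c)
  rw [mul_comm c]
  exact mul_le_mul_of_nonneg_left (ha n).2 (hγ0 _)

lemma abs_tsum_discounted_sub_le {b : ℕ → ℝ} (hb : ∀ n, 0 ≤ b n ∧ b n ≤ c) {k : ℕ}
    (hab : ∀ n < k, a n = b n) (t : ℕ) :
    |∑' n, γ (t + n) * a n - ∑' n, γ (t + n) * b n| ≤ c * Gam γ (t + k) := by
  rw [← (summable_discounted hγ0 hγs ha t).sum_add_tsum_nat_add k,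
    ← (summable_discounted hγ0 hγs hb t).sum_add_tsum_nat_add k,
    Finset.sum_congr rfl fun n hn => by rw [hab n (Finset.mem_range.mp hn)],
    add_sub_add_left_eq_sub]
  simp_rw [show ∀ n, t + (n + k) = t + k + n from fun n => by omega]
  obtain ⟨ha₀, ha₁⟩ := tsum_discounted_mem_Icc hγ0 hγs (fun n => ha (n + k)) (t + k)
  obtain ⟨hb₀, hb₁⟩ := tsum_discounted_mem_Icc hγ0 hγs (fun n => hb (n + k)) (t + k)
  exact abs_sub_le_of_nonneg_of_le ha₀ ha₁ hb₀ hb₁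

end Discount

lemma abs_V_sub_le_of_expectedReward_eq {A E : Type*} [Fintype E] {γ : ℕ → ℝ}
    (hγ0 : ∀ t, 0 ≤ γ t) (hγs : Summable γ) {r : E → ℝ} (hr : ∀ e, 0 ≤ r e ∧ r e ≤ 1)
    {π₁ π₂ : Policy A E} {ν : CCS A E} {h : Hist A E} {k : ℕ}
    (hagree : ∀ n < k, expectedReward r π₁ ν h n = expectedReward r π₂ ν h n) :
    |V γ r π₁ ν h - V γ r π₂ ν h| ≤ Gam γ (h.length + 1 + k) / Gam γ (h.length + 1) := by
  by_cases hpos : 0 < Gam γ (h.length + 1) ∧ 0 < ν.val h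
  · obtain ⟨hΓ, hν⟩ := hpos
    have hnorm : 0 < 1 / (Gam γ (h.length + 1) * ν.val h) := one_div_pos.mpr (mul_pos hΓ hν)
    simp only [V, if_pos (And.intro hΓ hν), ← mul_sub, abs_mul, abs_of_pos hnorm]
    calc _ ≤ 1 / (Gam γ (h.length + 1) * ν.val h) * (ν.val h * Gam γ (h.length + 1 + k)) :=
          mul_le_mul_of_nonneg_left (abs_tsum_discounted_sub_le hγ0 hγs
            (expectedReward_mem_Icc hr π₁ ν h) (expectedReward_mem_Icc hr π₂ ν h) hagree _)
            hnorm.le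
      _ = _ := by field_simp
  · simp only [V, if_neg hpos, sub_zero, abs_zero]
    exact div_nonneg (Gam_nonneg hγ0 _) (Gam_nonneg hγ0 _)

theorem discounted_values_general {A E : Type*} [Fintype E]
    (γ : ℕ → ℝ) (hγ0 : ∀ t, 0 ≤ γ t) (hγs : Summable γ)
    (r : E → ℝ) (hr : ∀ e : E, 0 ≤ r e ∧ r e ≤ 1)
    (k : ℕ) (π₁ π₂ : Policy A E)
    (hcoin : ∀ h : Hist A E, Consistent π₁ h → h.length < k → π₁ h = π₂ h)
    (ν : CCS A E) :
    |V γ r π₁ ν [] - V γ r π₂ ν []| ≤ Gam γ (k + 1) / Gam γ 1 := by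
  have hc : Consistent π₁ [] := fun _ hj => absurd hj (Nat.not_lt_zero _)
  have hbound := abs_V_sub_le_of_expectedReward_eq hγ0 hγs hr (ν := ν) (h := [])
    fun n hn => expectedReward_eq_of_agree hcoin ν hc (by simpa using hn)
  rwa [List.length_nil, zero_add, add_comm 1 k] at hbound

/-- **Discounted values.** If two policies coincide for the first `k` steps, their values
at the empty history differ by at most `Γ_{k+1}/Γ_1`, in every CCS. -/
theorem discounted_values {A E : Type*} [Fintype A] [Nonempty A] [Fintype E] [Nonempty E]
    (γ : ℕ → ℝ) (hγ0 : ∀ t, 0 ≤ γ t) (hγs : Summable γ)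
    (r : E → ℝ) (hr : ∀ e : E, 0 ≤ r e ∧ r e ≤ 1)
    (hΓ1 : 0 < Gam γ 1) (k : ℕ) (π₁ π₂ : Policy A E)
    (hcoin : ∀ h : Hist A E, Consistent π₁ h → h.length < k → π₁ h = π₂ h)
    (ν : CCS A E) :
    |V γ r π₁ ν [] - V γ r π₂ ν []| ≤ Gam γ (k + 1) / Gam γ 1 :=
  discounted_values_general γ hγ0 hγs r hr k π₁ π₂ hcoin ν
end

section
/- Let ξ be a CCS, π a policy, and e⁰ ∈ E a percept with r(e⁰) = 0. Then the π-dogmatic environment ν (which mimics ξ as long as actions follow π and, from the first deviation on, deterministically emits e⁰ while freezing the probability mass) is itself a chronological conditional semimeasure: it takes values in [0,1], satisfies ν(ϵ ∣ ϵ) ≤ 1, and Σ_{e_t ∈ E} ν(e_{1:t} ∣ a_{1:t}) ≤ ν(e_{<t} ∣ a_{<t}) for all t, a_{1:t}, e_{<t}. -/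
open scoped Classical

/-- Auxiliary function for the dogmatic environment: `pre` is the consistent
prefix processed so far, the second argument is the rest of the history. -/
noncomputable def dogmaAux {A E : Type*} [Fintype E] (ξ : CCS A E) (π : Policy A E)
    (e0 : E) : Hist A E → Hist A E → ℝ
  | pre, [] => ξ.val pre
  | pre, (a, e) :: rest =>
    if a = π pre then dogmaAux ξ π e0 (pre ++ [(a, e)]) rest
    else if e = e0 ∧ ∀ p ∈ rest, p.2 = e0 then ξ.val pre else 0

/-- The `π`-dogmatic environment for `ξ`: mimics `ξ` while the actions follow `π`;
from the first deviation on it deterministically emits `e0` and freezes the mass. -/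
noncomputable def dogma {A E : Type*} [Fintype E] (ξ : CCS A E) (π : Policy A E)
    (e0 : E) (h : Hist A E) : ℝ :=
  dogmaAux ξ π e0 [] h

/-- A CCS has full support iff it is positive on every history. -/
def FullSupport {A E : Type*} [Fintype E] (ξ : CCS A E) : Prop :=
  ∀ h : Hist A E, 0 < ξ.val h

lemma ccs_step_le {A E : Type*} [Fintype E] (ξ : CCS A E) (pre : Hist A E)
    (a : A) (e : E) : ξ.val (pre ++ [(a, e)]) ≤ ξ.val pre := by
  calc ξ.val (pre ++ [(a, e)]) ≤ ∑ e' : E, ξ.val (pre ++ [(a, e')]) :=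
        Finset.single_le_sum (f := fun e' => ξ.val (pre ++ [(a, e')]))
          (fun e' _ => ξ.nonneg _) (Finset.mem_univ e)
    _ ≤ ξ.val pre := ξ.chrono pre a

lemma dogmaAux_nil {A E : Type*} [Fintype E] (ξ : CCS A E) (π : Policy A E)
    (e0 : E) (pre : Hist A E) : dogmaAux ξ π e0 pre [] = ξ.val pre := rfl

lemma dogmaAux_cons {A E : Type*} [Fintype E] (ξ : CCS A E) (π : Policy A E)
    (e0 : E) (pre : Hist A E) (a : A) (e : E) (rest : Hist A E) :
    dogmaAux ξ π e0 pre ((a, e) :: rest) =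
      if a = π pre then dogmaAux ξ π e0 (pre ++ [(a, e)]) rest
      else if e = e0 ∧ ∀ p ∈ rest, p.2 = e0 then ξ.val pre else 0 := rfl

lemma dogmaAux_nonneg {A E : Type*} [Fintype E] (ξ : CCS A E) (π : Policy A E)
    (e0 : E) : ∀ (rest pre : Hist A E), 0 ≤ dogmaAux ξ π e0 pre rest := by
  intro rest
  induction rest with
  | nil => intro pre; exact ξ.nonneg pre
  | cons p rest ih =>
    intro pre
    obtain ⟨a, e⟩ := p
    rw [dogmaAux_cons]
    split
    · exact ih _
    · split
      · exact ξ.nonneg pre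
      · exact le_refl 0

lemma dogmaAux_le {A E : Type*} [Fintype E] (ξ : CCS A E) (π : Policy A E)
    (e0 : E) : ∀ (rest pre : Hist A E), dogmaAux ξ π e0 pre rest ≤ ξ.val pre := by
  intro rest
  induction rest with
  | nil => intro pre; exact le_refl _
  | cons p rest ih =>
    intro pre
    obtain ⟨a, e⟩ := p
    rw [dogmaAux_cons]
    split
    · exact le_trans (ih _) (ccs_step_le ξ pre a e)
    · split
      · exact le_refl _
      · exact ξ.nonneg pre

lemma dogmaAux_chrono {A E : Type*} [Fintype E] (ξ : CCS A E) (π : Policy A E)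
    (e0 : E) : ∀ (rest pre : Hist A E) (a : A),
      (∑ e : E, dogmaAux ξ π e0 pre (rest ++ [(a, e)])) ≤ dogmaAux ξ π e0 pre rest := by
  intro rest
  induction rest with
  | nil =>
    intro pre a
    rw [dogmaAux_nil]
    by_cases ha : a = π pre
    · calc (∑ e : E, dogmaAux ξ π e0 pre ([] ++ [(a, e)]))
          = ∑ e : E, ξ.val (pre ++ [(a, e)]) := by
            refine Finset.sum_congr rfl fun e _ => ?_
            rw [List.nil_append, dogmaAux_cons, if_pos ha, dogmaAux_nil]
        _ ≤ ξ.val pre := ξ.chrono pre a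
    · calc (∑ e : E, dogmaAux ξ π e0 pre ([] ++ [(a, e)]))
          = ∑ e : E, (if e = e0 then ξ.val pre else 0) := by
            refine Finset.sum_congr rfl fun e _ => ?_
            rw [List.nil_append, dogmaAux_cons, if_neg ha]
            by_cases he : e = e0
            · rw [if_pos ⟨he, by simp⟩, if_pos he]
            · rw [if_neg (fun hh => he hh.1), if_neg he]
        _ ≤ ξ.val pre := by simp
  | cons p rest ih =>
    intro pre a
    obtain ⟨b, f⟩ := p
    by_cases hb : b = π pre
    · calc (∑ e : E, dogmaAux ξ π e0 pre (((b, f) :: rest) ++ [(a, e)]))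
          = ∑ e : E, dogmaAux ξ π e0 (pre ++ [(b, f)]) (rest ++ [(a, e)]) := by
            refine Finset.sum_congr rfl fun e _ => ?_
            rw [List.cons_append, dogmaAux_cons, if_pos hb]
        _ ≤ dogmaAux ξ π e0 (pre ++ [(b, f)]) rest := ih _ a
        _ = dogmaAux ξ π e0 pre ((b, f) :: rest) := by rw [dogmaAux_cons, if_pos hb]
    · rw [dogmaAux_cons, if_neg hb]
      by_cases hc : f = e0 ∧ ∀ p ∈ rest, p.2 = e0
      · rw [if_pos hc]
        calc (∑ e : E, dogmaAux ξ π e0 pre (((b, f) :: rest) ++ [(a, e)]))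
            = ∑ e : E, (if e = e0 then ξ.val pre else 0) := by
              refine Finset.sum_congr rfl fun e _ => ?_
              rw [List.cons_append, dogmaAux_cons, if_neg hb]
              by_cases he : e = e0
              · have hall : ∀ p ∈ rest ++ [(a, e)], p.2 = e0 := by
                  intro p hp
                  rcases List.mem_append.mp hp with h | h
                  · exact hc.2 p h
                  · rw [List.mem_singleton.mp h]; exact he
                rw [if_pos ⟨hc.1, hall⟩, if_pos he]
              · rw [if_neg, if_neg he]
                rintro ⟨-, h2⟩
                exact he (h2 (a, e) (by simp))
          _ ≤ ξ.val pre := by simp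
      · rw [if_neg hc]
        refine le_of_eq (Finset.sum_eq_zero fun e _ => ?_)
        rw [List.cons_append, dogmaAux_cons, if_neg hb, if_neg]
        rintro ⟨h1, h2⟩
        exact hc ⟨h1, fun p hp => h2 p (List.mem_append.mpr (Or.inl hp))⟩

/-- **The dogmatic environment is a CCS**: values in `[0,1]`, value at the empty
history `≤ 1`, and the chronological semimeasure condition. -/
theorem dogma_is_CCS {A E : Type*} [Fintype A] [Nonempty A] [Fintype E] [Nonempty E]
    (γ : ℕ → ℝ) (hγ0 : ∀ t, 0 ≤ γ t) (hγs : Summable γ)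
    (r : E → ℝ) (hr : ∀ e : E, 0 ≤ r e ∧ r e ≤ 1)
    (ξ : CCS A E) (π : Policy A E) (e0 : E) (hr0 : r e0 = 0) :
    (∀ h : Hist A E, 0 ≤ dogma ξ π e0 h) ∧
    (∀ h : Hist A E, dogma ξ π e0 h ≤ 1) ∧
    dogma ξ π e0 [] ≤ 1 ∧
    (∀ (h : Hist A E) (a : A),
      (∑ e : E, dogma ξ π e0 (h ++ [(a, e)])) ≤ dogma ξ π e0 h) := by
  refine ⟨fun h => dogmaAux_nonneg ξ π e0 h [], fun h => ?_, ?_, fun h a => ?_⟩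
  · exact le_trans (dogmaAux_le ξ π e0 h []) (ξ.le_one [])
  · exact le_trans (dogmaAux_le ξ π e0 [] []) (ξ.le_one [])
  · exact dogmaAux_chrono ξ π e0 h [] a
end

section
/- (Dogmatic prior, core construction.) Let ξ be a CCS, π a policy, e⁰ ∈ E a percept with r(e⁰) = 0, and ε ∈ (0,1]. Let ν be the π-dogmatic environment for ξ and define ξ' := (1/2)·ν + (ε/2)·ξ. Then for every history h = ae_{<t} consistent with π with Γ_t > 0, ξ(e_{<t} ∣ a_{<t}) > 0 and V^π_ξ(h) > ε, the action α := π(h) is the unique ξ'-optimal action at h: V^*_{ξ'}(hα) > V^*_{ξ'}(hβ) for every β ∈ A with β ≠ α. -/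
open scoped Classical

/-!
On `π`-consistent histories the dogmatic environment agrees with `ξ`, so along `π` the mixture is
`ξ' = ((1 + ε)/2) ξ` and following `π` keeps the value `V^π_ξ(h) > ε`. After a deviation
`β ≠ π(h)` the dogmatic part only emits the reward-free percept `e⁰`: it contributes no reward
but still carries its share of the normalising mass `ξ'(h)`. Hence every policy starting with `β`
has `ξ'`-value at most `(ε/2) / ((1 + ε)/2) = ε/(1 + ε) < ε`.
-/

section Consistency

variable {A E : Type*}

lemma Consistent.extendH {π : Policy A E} {h : Hist A E} (hc : Consistent π h) (l : List E) :
    Consistent π (extendH π h l) := by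
  induction l generalizing h with
  | nil => exact hc
  | cons e l ih => exact ih (hc.append_singleton e)

lemma Consistent.fst_eq {π : Policy A E} {pre mid : Hist A E} {p : A × E}
    (hc : Consistent π (pre ++ p :: mid)) : p.1 = π pre := by
  simpa using hc pre.length (by simp)

lemma exists_extendH_eq_append (σ : Policy A E) (h : Hist A E) (l : List E) :
    ∃ rest : Hist A E, extendH σ h l = h ++ rest ∧ rest.map Prod.snd = l := by
  induction l generalizing h with
  | nil => exact ⟨[], by simp [extendH]⟩
  | cons e l ih =>
    obtain ⟨rest, hrest, hsnd⟩ := ih (h ++ [(σ h, e)])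
    exact ⟨(σ h, e) :: rest, by simpa [extendH] using hrest, by simp [hsnd]⟩

end Consistency

section Dogma

variable {A E : Type*} [Fintype E] (ξ : CCS A E) {π : Policy A E} (e0 : E)

lemma dogmaAux_append_of_consistent {pre mid : Hist A E} (hc : Consistent π (pre ++ mid))
    (tail : Hist A E) :
    dogmaAux ξ π e0 pre (mid ++ tail) = dogmaAux ξ π e0 (pre ++ mid) tail := by
  induction mid generalizing pre with
  | nil => simp
  | cons p mid ih =>
    obtain ⟨a, e⟩ := p
    rw [List.cons_append, dogmaAux, if_pos hc.fst_eq, ih (by simpa using hc)]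
    simp

lemma dogma_of_consistent {h : Hist A E} (hc : Consistent π h) : dogma ξ π e0 h = ξ.val h := by
  simpa [dogma, dogmaAux] using
    dogmaAux_append_of_consistent ξ e0 (pre := []) (by simpa using hc) []

lemma dogma_append_of_ne {h : Hist A E} (hc : Consistent π h) {a : A} (ha : a ≠ π h) (e : E)
    (rest : Hist A E) :
    dogma ξ π e0 (h ++ (a, e) :: rest) =
      if ∀ p ∈ (a, e) :: rest, p.2 = e0 then ξ.val h else 0 := by
  rw [dogma, dogmaAux_append_of_consistent ξ e0 (pre := []) (by simpa using hc), List.nil_append,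
    dogmaAux, if_neg ha]
  simp only [List.forall_mem_cons]

lemma mul_dogma_extendH_of_ne {r : E → ℝ} (hr0 : r e0 = 0) {h : Hist A E} (hc : Consistent π h)
    {σ : Policy A E} (hσ : σ h ≠ π h) {l : List E} {x : E} (hx : x ∈ l) :
    r x * dogma ξ π e0 (extendH σ h l) = 0 := by
  cases l with
  | nil => simp at hx
  | cons e l =>
    obtain ⟨rest, hrest, hsnd⟩ := exists_extendH_eq_append σ (h ++ [(σ h, e)]) l
    rw [extendH, hrest, List.append_assoc, List.singleton_append,
      dogma_append_of_ne ξ e0 hc hσ]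
    split_ifs with h0
    · have hx' : x ∈ ((σ h, e) :: rest).map Prod.snd := by simpa [hsnd] using hx
      obtain ⟨p, hp, rfl⟩ := List.mem_map.mp hx'
      rw [h0 p hp, hr0, zero_mul]
    · exact mul_zero _

end Dogma

section Value

variable {A E : Type*} [Fintype E] (γ : ℕ → ℝ) (r : E → ℝ)

/-- The unnormalised expected reward `∑_{e_{t:t+n}} r(e_{t+n}) f(e_{1:t+n} ∣ a_{1:t+n})` at time
`t + n`, where `t = h.length + 1` and the actions from time `t` on are chosen by `σ`. -/
noncomputable def rewardMass (σ : Policy A E) (f : Hist A E → ℝ) (h : Hist A E) (n : ℕ) : ℝ :=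
  ∑ es : Fin (n + 1) → E, r (es (Fin.last n)) * f (extendH σ h (List.ofFn es))

lemma V_eq_rewardMass (σ : Policy A E) (μ : CCS A E) (h : Hist A E) :
    V γ r σ μ h =
      if 0 < Gam γ (h.length + 1) ∧ 0 < μ.val h then
        1 / (Gam γ (h.length + 1) * μ.val h) *
          ∑' n : ℕ, γ (h.length + 1 + n) * rewardMass r σ μ.val h n
      else 0 :=
  rfl

lemma rewardMass_mix (σ : Policy A E) (f g : Hist A E → ℝ) (a b : ℝ) (h : Hist A E) (n : ℕ) :
    rewardMass r σ (fun x => a * f x + b * g x) h n =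
      a * rewardMass r σ f h n + b * rewardMass r σ g h n := by
  simp only [rewardMass, Finset.mul_sum, ← Finset.sum_add_distrib]
  exact Finset.sum_congr rfl fun _ _ => by ring

lemma rewardMass_congr {σ : Policy A E} {f g : Hist A E → ℝ} {h : Hist A E}
    (hfg : ∀ l, f (extendH σ h l) = g (extendH σ h l)) (n : ℕ) :
    rewardMass r σ f h n = rewardMass r σ g h n := by
  simp only [rewardMass, hfg]

lemma sum_val_extendH_le (μ : CCS A E) (σ : Policy A E) (n : ℕ) (h : Hist A E) :
    ∑ es : Fin n → E, μ.val (extendH σ h (List.ofFn es)) ≤ μ.val h := by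
  induction n generalizing h with
  | zero => simp [extendH]
  | succ n ih =>
    have hsplit : ∑ es : Fin (n + 1) → E, μ.val (extendH σ h (List.ofFn es)) =
        ∑ e : E, ∑ es : Fin n → E, μ.val (extendH σ (h ++ [(σ h, e)]) (List.ofFn es)) := by
      rw [← Fintype.sum_prod_type']
      exact Fintype.sum_equiv (Fin.consEquiv fun _ => E).symm _ _ fun es => by
        rw [List.ofFn_succ, extendH]; rfl
    rw [hsplit]
    exact (Finset.sum_le_sum fun e _ => ih _).trans (μ.chrono h (σ h))

variable {r}

lemma rewardMass_nonneg (hr : ∀ e, 0 ≤ r e ∧ r e ≤ 1) (σ : Policy A E) (μ : CCS A E)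
    (h : Hist A E) (n : ℕ) : 0 ≤ rewardMass r σ μ.val h n :=
  Finset.sum_nonneg fun _ _ => mul_nonneg (hr _).1 (μ.nonneg _)

lemma rewardMass_le (hr : ∀ e, 0 ≤ r e ∧ r e ≤ 1) (σ : Policy A E) (μ : CCS A E)
    (h : Hist A E) (n : ℕ) : rewardMass r σ μ.val h n ≤ μ.val h :=
  calc rewardMass r σ μ.val h n ≤ ∑ es : Fin (n + 1) → E, μ.val (extendH σ h (List.ofFn es)) :=
        Finset.sum_le_sum fun _ _ => mul_le_of_le_one_left (μ.nonneg _) (hr _).2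
    _ ≤ μ.val h := sum_val_extendH_le μ σ (n + 1) h

variable {γ}

lemma tsum_mul_le_Gam (hγ0 : ∀ t, 0 ≤ γ t) (hγs : Summable γ) (t : ℕ) {S : ℕ → ℝ} {C : ℝ}
    (hS0 : ∀ n, 0 ≤ S n) (hSC : ∀ n, S n ≤ C) :
    ∑' n, γ (t + n) * S n ≤ Gam γ t * C := by
  have hγt : Summable fun n => γ (t + n) * C :=
    (hγs.comp_injective (add_right_injective t)).mul_right C
  have hle : ∀ n, γ (t + n) * S n ≤ γ (t + n) * C :=
    fun n => mul_le_mul_of_nonneg_left (hSC n) (hγ0 _)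
  calc ∑' n, γ (t + n) * S n ≤ ∑' n, γ (t + n) * C :=
        (hγt.of_nonneg_of_le (fun n => mul_nonneg (hγ0 _) (hS0 n)) hle).tsum_le_tsum hle hγt
    _ = Gam γ t * C := tsum_mul_right

lemma V_le_one (hγ0 : ∀ t, 0 ≤ γ t) (hγs : Summable γ) (hr : ∀ e, 0 ≤ r e ∧ r e ≤ 1)
    (σ : Policy A E) (μ : CCS A E) (h : Hist A E) : V γ r σ μ h ≤ 1 := by
  rw [V_eq_rewardMass]
  split_ifs with hpos
  · rw [one_div_mul_eq_div, div_le_one (mul_pos hpos.1 hpos.2)]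
    exact tsum_mul_le_Gam hγ0 hγs _ (rewardMass_nonneg hr σ μ h) (rewardMass_le hr σ μ h)
  · exact zero_le_one

lemma Vact_le_VOptAct (hγ0 : ∀ t, 0 ≤ γ t) (hγs : Summable γ) (hr : ∀ e, 0 ≤ r e ∧ r e ≤ 1)
    (σ : Policy A E) (μ : CCS A E) (h : Hist A E) (a : A) :
    Vact γ r σ μ h a ≤ VOptAct γ r μ h a :=
  le_ciSup (f := fun σ => Vact γ r σ μ h a)
    ⟨1, by rintro _ ⟨σ', rfl⟩; exact V_le_one hγ0 hγs hr _ μ h⟩ σ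

lemma Vact_self (σ : Policy A E) (μ : CCS A E) (h : Hist A E) :
    Vact γ r σ μ h (σ h) = V γ r σ μ h := by
  rw [Vact]
  congr
  funext g
  split_ifs with hg <;> simp [hg]

lemma V_eq_div_mul_of_rewardMass_eq {σ : Policy A E} {μ μ' : CCS A E} {h : Hist A E} {c d : ℝ}
    (hc : 0 < c) (hroot : μ'.val h = c * μ.val h)
    (hmass : ∀ n, rewardMass r σ μ'.val h n = d * rewardMass r σ μ.val h n) :
    V γ r σ μ' h = d / c * V γ r σ μ h := by
  have hpos : 0 < μ'.val h ↔ 0 < μ.val h := by rw [hroot, mul_pos_iff_of_pos_left hc]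
  rw [V_eq_rewardMass, V_eq_rewardMass]
  by_cases hif : 0 < Gam γ (h.length + 1) ∧ 0 < μ.val h
  · rw [if_pos (hif.imp_right hpos.mpr), if_pos hif]
    simp only [hmass, hroot, mul_left_comm _ d, tsum_mul_left]
    field_simp
  · rw [if_neg fun h' => hif (h'.imp_right hpos.mp), if_neg hif, mul_zero]

end Value

section DogmaReward

variable {A E : Type*} [Fintype E] (r : E → ℝ) (ξ : CCS A E) {π : Policy A E} (e0 : E)
  {h : Hist A E}

lemma rewardMass_dogma_of_consistent (hc : Consistent π h) (n : ℕ) :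
    rewardMass r π (dogma ξ π e0) h n = rewardMass r π ξ.val h n :=
  rewardMass_congr r (fun l => dogma_of_consistent ξ e0 (hc.extendH l)) n

variable {r}

lemma rewardMass_dogma_of_ne (hr0 : r e0 = 0) (hc : Consistent π h) {σ : Policy A E}
    (hσ : σ h ≠ π h) (n : ℕ) : rewardMass r σ (dogma ξ π e0) h n = 0 :=
  Finset.sum_eq_zero fun _ _ =>
    mul_dogma_extendH_of_ne ξ e0 hr0 hc hσ (List.mem_ofFn.mpr ⟨Fin.last n, rfl⟩)

end DogmaReward

theorem dogmatic_prior_general {A E : Type*} [Fintype E]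
    (γ : ℕ → ℝ) (hγ0 : ∀ t, 0 ≤ γ t) (hγs : Summable γ)
    (r : E → ℝ) (hr : ∀ e : E, 0 ≤ r e ∧ r e ≤ 1)
    (ξ : CCS A E) (π : Policy A E) (e0 : E) (hr0 : r e0 = 0)
    (ε : ℝ) (hε0 : 0 < ε)
    (ν ξ' : CCS A E)
    (hν : ∀ h : Hist A E, ν.val h = dogma ξ π e0 h)
    (hξ' : ∀ h : Hist A E, ξ'.val h = (1 / 2) * ν.val h + (ε / 2) * ξ.val h)
    (h : Hist A E) (hcons : Consistent π h)
    (hV : ε < V γ r π ξ h) :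
    ∀ β : A, β ≠ π h → VOptAct γ r ξ' h β < VOptAct γ r ξ' h (π h) := by
  intro β hβ
  have hc : 0 < (1 + ε) / 2 := by positivity
  have hroot : ξ'.val h = (1 + ε) / 2 * ξ.val h := by
    rw [hξ', hν, dogma_of_consistent ξ e0 hcons]; ring
  have hmass (σ : Policy A E) (n : ℕ) : rewardMass r σ ξ'.val h n =
      1 / 2 * rewardMass r σ (dogma ξ π e0) h n + ε / 2 * rewardMass r σ ξ.val h n := by
    rw [← rewardMass_mix, show ξ'.val = _ from funext fun g => (hξ' g).trans (by rw [hν])]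
  have hdeviate (σ : Policy A E) : Vact γ r σ ξ' h β ≤ ε / (1 + ε) := by
    have hσ : (fun g => if g = h then β else σ g) h ≠ π h := by simpa using hβ
    rw [Vact, V_eq_div_mul_of_rewardMass_eq hc hroot (d := ε / 2) fun n => by
      rw [hmass, rewardMass_dogma_of_ne ξ e0 hr0 hcons hσ]; ring]
    calc ε / 2 / ((1 + ε) / 2) * V γ r _ ξ h ≤ ε / 2 / ((1 + ε) / 2) :=
          mul_le_of_le_one_right (by positivity) (V_le_one hγ0 hγs hr _ ξ h)
      _ = ε / (1 + ε) := by field_simp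
  have hfollow : Vact γ r π ξ' h (π h) = V γ r π ξ h := by
    rw [Vact_self, V_eq_div_mul_of_rewardMass_eq hc hroot (d := (1 + ε) / 2) fun n => by
      rw [hmass, rewardMass_dogma_of_consistent r ξ e0 hcons]; ring, div_self hc.ne', one_mul]
  have : Nonempty A := ⟨β⟩
  calc VOptAct γ r ξ' h β ≤ ε / (1 + ε) := ciSup_le hdeviate
    _ < ε := by rw [div_lt_iff₀ (by positivity)]; nlinarith
    _ < Vact γ r π ξ' h (π h) := hfollow ▸ hV
    _ ≤ VOptAct γ r ξ' h (π h) := Vact_le_VOptAct hγ0 hγs hr π ξ' h (π h)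

/-- **Dogmatic prior (core construction).** With `ξ' = (1/2)·ν + (ε/2)·ξ` for the
`π`-dogmatic `ν`, on any `π`-consistent history `h` with `V^π_ξ(h) > ε`,
the action `π(h)` is the unique `ξ'`-optimal action. -/
theorem dogmatic_prior {A E : Type*} [Fintype A] [Nonempty A] [Fintype E] [Nonempty E]
    (γ : ℕ → ℝ) (hγ0 : ∀ t, 0 ≤ γ t) (hγs : Summable γ)
    (r : E → ℝ) (hr : ∀ e : E, 0 ≤ r e ∧ r e ≤ 1)
    (ξ : CCS A E) (π : Policy A E) (e0 : E) (hr0 : r e0 = 0)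
    (ε : ℝ) (hε0 : 0 < ε) (hε1 : ε ≤ 1)
    (ν ξ' : CCS A E)
    (hν : ∀ h : Hist A E, ν.val h = dogma ξ π e0 h)
    (hξ' : ∀ h : Hist A E, ξ'.val h = (1 / 2) * ν.val h + (ε / 2) * ξ.val h)
    (h : Hist A E) (hcons : Consistent π h)
    (hΓ : 0 < Gam γ (h.length + 1)) (hpos : 0 < ξ.val h)
    (hV : ε < V γ r π ξ h) :
    ∀ β : A, β ≠ π h → VOptAct γ r ξ' h β < VOptAct γ r ξ' h (π h) :=
  dogmatic_prior_general γ hγ0 hγs r hr ξ π e0 hr0 ε hε0 ν ξ' hν hξ' h hcons hV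
end
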